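/- Let G be a finite group, let d ≥ 2, and let T = ker(Tr : (ℤ/2^d ℤ)[G] → ℤ/2^{d-1}ℤ), where Tr sends Σ a_g [g] to Σ a_g mod 2^{d-1}. If |G| is odd, then T/2T is a cyclic 𝔽₂[G]-module, hence isomorphic to 𝔽₂[G]. -/

import Mathlib

/-- The augmentation (coefficient-sum) ring homomorphism on a group algebra. -/
noncomputable def aug (k : Type*) (G : Type*) [CommRing k] [Monoid G] :
    MonoidAlgebra k G →+* k :=
  ((MonoidAlgebra.lift k k G) 1).toRingHom

/-- The trace map `Tr : (ℤ/mℤ)[G] → ℤ/kℤ` (for `k ∣ m`) sending `Σ a_g [g]` to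
`Σ a_g mod k`. -/
noncomputable def trMap (G : Type*) [Monoid G] (m k : ℕ) (h : k ∣ m) :
    MonoidAlgebra (ZMod m) G →+* ZMod k :=
  (ZMod.castHom h (ZMod k)).comp (aug (ZMod m) G)

/-- `T = ker(Tr : (ℤ/2^dℤ)[G] → ℤ/2^{d-1}ℤ)`. -/
noncomputable def TId (G : Type*) [Group G] (d : ℕ) :
    Ideal (MonoidAlgebra (ZMod (2 ^ d)) G) :=
  RingHom.ker (trMap G (2 ^ d) (2 ^ (d - 1)) (pow_dvd_pow 2 (Nat.sub_le d 1)))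

/-- The quotient module `T/2T`. -/
noncomputable abbrev TQuot (G : Type*) [Group G] (d : ℕ) :=
  (TId G d) ⧸ LinearMap.range
    (2 : Module.End (MonoidAlgebra (ZMod (2 ^ d)) G) (TId G d))

section Aux

variable {k : Type*} {G : Type*} [CommRing k] [Group G]

lemma aug_single (g : G) (a : k) : aug k G (MonoidAlgebra.single g a) = a := by
  simp [aug]

lemma aug_smul (c : k) (x : MonoidAlgebra k G) : aug k G (c • x) = c * aug k G x := by
  have := map_smul ((MonoidAlgebra.lift k k G) 1) c x
  simpa [aug, smul_eq_mul] using this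

variable [Fintype G]

/-- The sum of all group elements in the group algebra. -/
noncomputable def sig (k : Type*) (G : Type*) [CommRing k] [Group G] [Fintype G] :
    MonoidAlgebra k G := ∑ g : G, MonoidAlgebra.single g 1

lemma aug_sig : aug k G (sig k G) = (Nat.card G : k) := by
  rw [sig, map_sum]
  simp [aug_single, Nat.card_eq_fintype_card]

lemma sig_mul_of (g : G) : sig k G * MonoidAlgebra.single g 1 = sig k G := by
  rw [sig, Finset.sum_mul]
  refine Fintype.sum_equiv (Equiv.mulRight g) _ _ fun h => ?_
  simp [MonoidAlgebra.single_mul_single]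

lemma of_mul_sig (g : G) : MonoidAlgebra.single g 1 * sig k G = sig k G := by
  rw [sig, Finset.mul_sum]
  refine Fintype.sum_equiv (Equiv.mulLeft g) _ _ fun h => ?_
  simp [MonoidAlgebra.single_mul_single]

lemma sig_mul (x : MonoidAlgebra k G) : sig k G * x = aug k G x • sig k G := by
  induction x using MonoidAlgebra.induction_linear with
  | zero => simp
  | add f h hf hh => rw [mul_add, hf, hh, map_add, add_smul]
  | single g a =>
      have h1 : (MonoidAlgebra.single g a : MonoidAlgebra k G)
          = a • MonoidAlgebra.single g 1 := by
        rw [MonoidAlgebra.smul_single', mul_one]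
      rw [h1, mul_smul_comm, sig_mul_of, aug_smul, aug_single, mul_one]

lemma mul_sig (x : MonoidAlgebra k G) : x * sig k G = aug k G x • sig k G := by
  induction x using MonoidAlgebra.induction_linear with
  | zero => simp
  | add f h hf hh => rw [add_mul, hf, hh, map_add, add_smul]
  | single g a =>
      have h1 : (MonoidAlgebra.single g a : MonoidAlgebra k G)
          = a • MonoidAlgebra.single g 1 := by
        rw [MonoidAlgebra.smul_single', mul_one]
      rw [h1, smul_mul_assoc, of_mul_sig, aug_smul, aug_single, mul_one]

end Aux

section ZModAux

/-- Kernel of the cast map `ZMod n → ZMod m` for `m ∣ n`. -/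
lemma zmod_cast_eq_zero_iff {n m : ℕ} [NeZero n] (h : m ∣ n) (a : ZMod n) :
    ZMod.castHom h (ZMod m) a = 0 ↔ ∃ b : ZMod n, a = (m : ZMod n) * b := by
  haveI : NeZero m := ⟨by rintro rfl; exact (NeZero.ne n) (zero_dvd_iff.mp h)⟩
  constructor
  · intro h0
    have hv : ((a.val : ℕ) : ZMod m) = 0 := by
      rw [ZMod.natCast_val (R := ZMod m) a]
      rwa [ZMod.castHom_apply] at h0
    rw [ZMod.natCast_eq_zero_iff] at hv
    obtain ⟨c, hc⟩ := hv
    refine ⟨(c : ZMod n), ?_⟩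
    have : ((a.val : ℕ) : ZMod n) = a := by
      rw [ZMod.natCast_val, ZMod.cast_id]
    rw [← this, hc]
    push_cast
    ring
  · rintro ⟨b, rfl⟩
    rw [map_mul, map_natCast, ZMod.natCast_self, zero_mul]

lemma zmod_pow_mul_eq_zero_iff {d : ℕ} (hd : 1 ≤ d) (a : ZMod (2 ^ d)) :
    ((2 ^ (d - 1) : ℕ) : ZMod (2 ^ d)) * a = 0 ↔ ∃ b : ZMod (2 ^ d), a = 2 * b := by
  haveI : NeZero (2 ^ d) := ⟨pow_ne_zero d (by norm_num)⟩
  have hdd : 2 ^ (d - 1) * 2 = 2 ^ d := by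
    rw [← pow_succ, Nat.sub_add_cancel hd]
  constructor
  · intro h0
    have ha : ((a.val : ℕ) : ZMod (2 ^ d)) = a := by
      rw [ZMod.natCast_val, ZMod.cast_id]
    have h1 : ((2 ^ (d - 1) * a.val : ℕ) : ZMod (2 ^ d)) = 0 := by
      rw [Nat.cast_mul, ha]; exact h0
    rw [ZMod.natCast_eq_zero_iff] at h1
    obtain ⟨v, hv⟩ : ∃ v, a.val = v := ⟨a.val, rfl⟩
    rw [hv, ← hdd] at h1
    have h2 : 2 ∣ a.val := by
      rw [hv]
      exact (mul_dvd_mul_iff_left (by positivity : (2:ℕ) ^ (d-1) ≠ 0)).mp h1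
    obtain ⟨c, hc⟩ := h2
    refine ⟨(c : ZMod (2 ^ d)), ?_⟩
    rw [← ha, hc]
    push_cast
    ring
  · rintro ⟨b, rfl⟩
    have h2 : ((2 ^ (d - 1) : ℕ) : ZMod (2 ^ d)) * 2 = 0 := by
      have : ((2 ^ (d - 1) : ℕ) : ZMod (2 ^ d)) * ((2 : ℕ) : ZMod (2 ^ d)) = 0 := by
        rw [← Nat.cast_mul, hdd, ZMod.natCast_self]
      simpa using this
    rw [← mul_assoc, h2, zero_mul]

end ZModAux

set_option maxHeartbeats 1000000 in
/-- Let `G` be a finite group of odd order, `d ≥ 2`, and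
`T = ker(Tr : (ℤ/2^dℤ)[G] → ℤ/2^{d-1}ℤ)`.  Then `T/2T` is a cyclic `𝔽₂[G]`-module,
hence isomorphic (as a `G`-module) to `𝔽₂[G]`. -/
theorem stmt6 {G : Type*} [Group G] [Fintype G] (d : ℕ) (hd : 2 ≤ d)
    (hodd : Odd (Nat.card G)) :
    (∃ q : TQuot G d, Submodule.span (MonoidAlgebra (ZMod (2 ^ d)) G) {q} = ⊤) ∧
    ∃ e : TQuot G d ≃+ MonoidAlgebra (ZMod 2) G, ∀ (g : G) (x : TQuot G d),
      e ((MonoidAlgebra.of (ZMod (2 ^ d)) G g) • x) =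
        MonoidAlgebra.of (ZMod 2) G g * e x := by
  classical
  haveI : NeZero (2 ^ d) := ⟨pow_ne_zero d (by norm_num)⟩
  set K := ZMod (2 ^ d) with hKdef
  have hcop : (Nat.card G).Coprime (2 ^ d) := (Nat.coprime_two_right.mpr hodd).pow_right d
  set ν : K := (Nat.card G : K) with hν_def
  have hν : ν * ν⁻¹ = 1 := ZMod.coe_mul_inv_eq_one _ hcop
  set e : MonoidAlgebra K G := ν⁻¹ • sig K G with he_def
  set p : K := ((2 ^ (d - 1) : ℕ) : K) with hp_def
  set t : MonoidAlgebra K G := p • e + (1 - e) with ht_def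
  -- basic facts about e and t
  have haug_e : aug K G e = 1 := by
    rw [he_def, aug_smul, aug_sig, ← hν_def, mul_comm]
    exact hν
  have he_mul : ∀ x, e * x = aug K G x • e := by
    intro x
    rw [he_def, smul_mul_assoc, sig_mul, smul_comm]
  have hmul_e : ∀ x, x * e = aug K G x • e := by
    intro x
    rw [he_def, mul_smul_comm, mul_sig, smul_comm]
  have he_comm : ∀ x, e * x = x * e := fun x => by rw [he_mul, hmul_e]
  have hee : e * e = e := by rw [he_mul, haug_e, one_smul]
  have ht_e : t * e = p • e := by
    rw [ht_def, add_mul, smul_mul_assoc, hee, sub_mul, one_mul, hee, sub_self, add_zero]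
  have h1e_t : (1 - e) * t = 1 - e := by
    have h1e : (1 - e) * e = 0 := by rw [sub_mul, one_mul, hee, sub_self]
    rw [ht_def, mul_add, mul_smul_comm, h1e, smul_zero, zero_add, mul_sub, mul_one, h1e,
      sub_zero]
  have ht_comm : ∀ x, t * x = x * t := by
    intro x
    have h1 : (1 - e) * x = x * (1 - e) := by
      rw [sub_mul, mul_sub, one_mul, mul_one, he_comm]
    rw [ht_def, add_mul, mul_add, smul_mul_assoc, he_comm, ← mul_smul_comm, h1]
  have haug_t : aug K G t = p := by
    rw [ht_def, map_add, aug_smul, haug_e, mul_one, map_sub, map_one, haug_e, sub_self,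
      add_zero]
  have hdd : 2 ^ (d - 1) * 2 = 2 ^ d := by
    rw [← pow_succ, Nat.sub_add_cancel (by omega)]
  have htp2 : p * 2 = 0 := by
    have : p * ((2 : ℕ) : K) = 0 := by
      rw [hp_def, ← Nat.cast_mul, hdd]
      exact ZMod.natCast_self _
    simpa using this
  -- membership of t * r in T
  have htmem : ∀ r : MonoidAlgebra K G, t * r ∈ TId G d := by
    intro r
    rw [TId, RingHom.mem_ker, trMap, RingHom.comp_apply, map_mul, haug_t, map_mul,
      hp_def, map_natCast, ZMod.natCast_self, zero_mul]
  -- the homomorphism χ : R →+ T/2T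
  set χ : MonoidAlgebra K G →+ TQuot G d := AddMonoidHom.mk'
    (fun r => Submodule.Quotient.mk (⟨t * r, htmem r⟩ : TId G d))
    (fun a b => by
      rw [← Submodule.Quotient.mk_add]
      exact congrArg _ (Subtype.ext (mul_add t a b))) with hχ_def
  have hχ_apply : ∀ r, χ r = Submodule.Quotient.mk (⟨t * r, htmem r⟩ : TId G d) :=
    fun r => rfl
  -- χ is surjective
  have hχsurj : Function.Surjective χ := by
    rintro x
    obtain ⟨⟨v, hv⟩, rfl⟩ := Submodule.Quotient.mk_surjective _ x
    have hv' : ZMod.castHom (pow_dvd_pow 2 (Nat.sub_le d 1)) (ZMod (2 ^ (d - 1)))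
        (aug K G v) = 0 := by
      rwa [TId, RingHom.mem_ker, trMap, RingHom.comp_apply] at hv
    obtain ⟨c, hc⟩ := (zmod_cast_eq_zero_iff _ _).mp hv'
    rw [← hp_def] at hc
    refine ⟨c • e + (v - e * v), ?_⟩
    rw [hχ_apply]
    refine congrArg _ (Subtype.ext ?_)
    show t * (c • e + (v - e * v)) = v
    have hev : e * v = (p * c) • e := by rw [he_mul, hc]
    have h2 : t * (e * v) = p • (e * v) := by rw [← mul_assoc, ht_e, smul_mul_assoc]
    have h3 : t * v = p • (e * v) + (v - e * v) := by
      rw [ht_def, add_mul, smul_mul_assoc, sub_mul, one_mul]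
    have h4 : t * (c • e) = (c * p) • e := by rw [mul_smul_comm, ht_e, smul_smul]
    rw [mul_add, mul_sub, h2, h3, h4, hev, mul_comm c p]
    abel
  -- the reduction map π : R →+ 𝔽₂[G]
  have hdvd2 : (2 : ℕ) ∣ 2 ^ d := dvd_pow_self 2 (by omega)
  set π : MonoidAlgebra K G →+ MonoidAlgebra (ZMod 2) G :=
    (MonoidAlgebra.mapRingHom G (ZMod.castHom hdvd2 (ZMod 2))).toAddMonoidHom with hπ_def
  have hπ_apply : ∀ (r : MonoidAlgebra K G) (g : G),
      (π r).coeff g = ZMod.castHom hdvd2 (ZMod 2) (r.coeff g) := fun r g =>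
      MonoidAlgebra.coeff_mapRingHom _ r g
  have hc2 : ∀ a : K, ZMod.castHom hdvd2 (ZMod 2) a = 0 ↔ 2 ∣ a.val := by
    intro a
    rw [ZMod.castHom_apply, ← ZMod.natCast_val (R := ZMod 2) a,
      ZMod.natCast_eq_zero_iff]
  -- halving
  have hhalf0 : ((((0 : K).val / 2 : ℕ)) : K) = 0 := by simp
  have hhalf : ∀ a : K, 2 ∣ a.val → (((a.val / 2 : ℕ)) : K) + (((a.val / 2 : ℕ)) : K) = a := by
    intro a ha
    obtain ⟨c, hcc⟩ := ha
    have h1 : a.val / 2 = c := by omega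
    have h2 : c + c = a.val := by omega
    rw [h1, ← Nat.cast_add, h2, ZMod.natCast_val, ZMod.cast_id]
  -- (2 : End) acts as doubling
  have h2end : ∀ z : TId G d,
      (2 : Module.End (MonoidAlgebra K G) (TId G d)) z = z + z := by
    intro z
    have h21 : (2 : Module.End (MonoidAlgebra K G) (TId G d)) = 1 + 1 := by norm_num
    rw [h21, LinearMap.add_apply, Module.End.one_apply]
  have hchar2 : ∀ w : MonoidAlgebra (ZMod 2) G, w + w = 0 := by
    intro w
    rw [← two_smul (ZMod 2) w, show (2 : ZMod 2) = 0 from rfl, zero_smul]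
  -- kernels agree
  have hker : χ.ker = π.ker := by
    ext r
    simp only [AddMonoidHom.mem_ker]
    constructor
    · intro h
      rw [hχ_apply, Submodule.Quotient.mk_eq_zero] at h
      obtain ⟨z, hz⟩ := h
      rw [h2end] at hz
      have hz' : (z : MonoidAlgebra K G) + (z : MonoidAlgebra K G) = t * r := by
        simpa using congrArg Subtype.val hz
      -- aug of z is divisible by p
      have hzmem : ZMod.castHom (pow_dvd_pow 2 (Nat.sub_le d 1)) (ZMod (2 ^ (d - 1)))
          (aug K G (z : MonoidAlgebra K G)) = 0 := by
        have h0 := RingHom.mem_ker.mp z.2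
        rwa [trMap, RingHom.comp_apply] at h0
      obtain ⟨c, hcz⟩ := (zmod_cast_eq_zero_iff _ _).mp hzmem
      rw [← hp_def] at hcz
      have haugz : p * aug K G r = 0 := by
        have := congrArg (aug K G) hz'
        rw [map_add, map_mul, haug_t, hcz] at this
        rw [← this, ← two_mul, ← mul_assoc, mul_comm (2 : K) p, htp2, zero_mul]
      obtain ⟨b, hb⟩ := (zmod_pow_mul_eq_zero_iff (by omega) (aug K G r)).mp
        (by rw [← hp_def]; exact haugz)
      have h1er : (1 - e) * r = (1 - e) * (z : MonoidAlgebra K G) + (1 - e) * z := by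
        have h6 : (1 - e) * (t * r) = (1 - e) * r := by rw [← mul_assoc, h1e_t]
        rw [← h6, ← hz', mul_add]
      have hsplit : r = (e * r) + (1 - e) * r := by
        have h5 : e + (1 - e) = 1 := by abel
        rw [← add_mul, h5, one_mul]
      have her : e * r = b • e + b • e := by
        rw [he_mul, hb, two_mul, add_smul]
      have hr2 : r = (b • e + (1 - e) * z) + (b • e + (1 - e) * z) := by
        rw [hsplit, her, h1er]; abel
      rw [hr2, map_add, hchar2]
    · intro h
      have hdiv : ∀ g : G, 2 ∣ (r.coeff g).val := by
        intro g
        refine (hc2 _).mp ?_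
        rw [← hπ_apply, h]
        rfl
      set s : MonoidAlgebra K G :=
        MonoidAlgebra.ofCoeff (Finsupp.mapRange (fun a : K => (((a.val / 2 : ℕ)) : K)) hhalf0
          r.coeff) with hs_def
      have hs : s + s = r := by
        ext g
        rw [MonoidAlgebra.coeff_add, Finsupp.add_apply, hs_def, MonoidAlgebra.coeff_ofCoeff,
          Finsupp.mapRange_apply]
        exact hhalf _ (hdiv g)
      rw [hχ_apply, Submodule.Quotient.mk_eq_zero]
      refine ⟨⟨t * s, htmem s⟩, ?_⟩
      rw [h2end]
      exact Subtype.ext (by simp only [Submodule.coe_add]; rw [← mul_add, hs])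
  -- π is surjective
  have hπsurj : Function.Surjective π := by
    intro w
    refine ⟨MonoidAlgebra.ofCoeff (Finsupp.mapRange (fun a : ZMod 2 => ((a.val : ℕ) : K))
      (by simp) w.coeff), ?_⟩
    ext g
    rw [hπ_apply, MonoidAlgebra.coeff_ofCoeff, Finsupp.mapRange_apply, map_natCast, ZMod.natCast_val, ZMod.cast_id]
  clear_value χ π
  -- assemble the equivalence
  let E1 := QuotientAddGroup.quotientKerEquivOfSurjective χ hχsurj
  let E2 := QuotientAddGroup.quotientKerEquivOfSurjective π hπsurj
  let E : TQuot G d ≃+ MonoidAlgebra (ZMod 2) G :=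
    E1.symm.trans ((QuotientAddGroup.quotientAddEquivOfEq hker).trans E2)
  have hE : ∀ r, E (χ r) = π r := by
    intro r
    have h1 : E1 (QuotientAddGroup.mk r) = χ r := QuotientAddGroup.kerLift_mk χ r
    have h2 : E1.symm (χ r) = QuotientAddGroup.mk r := by
      rw [← h1, AddEquiv.symm_apply_apply]
    show ((QuotientAddGroup.quotientAddEquivOfEq hker).trans E2) (E1.symm (χ r)) = π r
    rw [h2, AddEquiv.trans_apply, QuotientAddGroup.quotientAddEquivOfEq_mk]
    exact QuotientAddGroup.kerLift_mk π r
  constructor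
  · -- cyclicity
    refine ⟨χ 1, ?_⟩
    rw [eq_top_iff]
    rintro x -
    obtain ⟨r, rfl⟩ := hχsurj x
    refine Submodule.mem_span_singleton.mpr ⟨r, ?_⟩
    rw [hχ_apply, hχ_apply, ← Submodule.Quotient.mk_smul]
    refine congrArg _ (Subtype.ext ?_)
    show r • (t * 1) = t * r
    rw [smul_eq_mul, mul_one, ht_comm]
  · -- the isomorphism
    refine ⟨E, ?_⟩
    intro g x
    obtain ⟨r, rfl⟩ := hχsurj x
    have hsw : (MonoidAlgebra.of K G g) • χ r = χ (MonoidAlgebra.of K G g * r) := by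
      rw [hχ_apply, hχ_apply, ← Submodule.Quotient.mk_smul]
      refine congrArg _ (Subtype.ext ?_)
      show MonoidAlgebra.of K G g • (t * r) = t * (MonoidAlgebra.of K G g * r)
      rw [smul_eq_mul, ← mul_assoc, ← ht_comm, mul_assoc]
    rw [hsw, hE, hE]
    ext h
    have hL : (MonoidAlgebra.of K G g * r).coeff h = r.coeff (g⁻¹ * h) := by
      rw [MonoidAlgebra.of_apply, MonoidAlgebra.coeff_single_mul_apply, one_mul]
    have hR : (MonoidAlgebra.of (ZMod 2) G g * π r).coeff h = (π r).coeff (g⁻¹ * h) := by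
      rw [MonoidAlgebra.of_apply, MonoidAlgebra.coeff_single_mul_apply, one_mul]
    rw [hπ_apply, hL, hR, hπ_apply]
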